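/- In the setting of the forward-chaining chain S = W_0 ⊊ W_1 ⊊ ⋯ ⊊ W_t ⊇ S' associated with a round-minimal L-optimal CNF Φ for price_L(S,S'), with B_i a smallest member of 𝓑 contained in W_i for i = 0,…,t−1 and B_t := S', the pure Horn CNF Φ^(1) := ⋀_{i=0}^{t−1} B_i → (B_{i+1} \ (S ∪ ⋃_{j=1}^{i} B_j)) satisfies |Φ^(1)|_L = |Φ|_L = price_L(S,S'). -/

import Mathlib

open Finset

variable {V : Type*} [Fintype V] [DecidableEq V]

/-- A pure Horn CNF is a finite set of clauses `(B, v)`: body `B`, head `v`,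
with `B` nonempty and `v ∉ B`. -/
def PureHorn (Φ : Finset (Finset V × V)) : Prop :=
  ∀ c ∈ Φ, c.1.Nonempty ∧ c.2 ∉ c.1

/-- A set `W` is closed under the clauses of `Φ`. -/
def HornClosed (Φ : Finset (Finset V × V)) (W : Set V) : Prop :=
  ∀ c ∈ Φ, ↑c.1 ⊆ W → c.2 ∈ W

/-- Forward-chaining closure `F_Φ(Z)`: the smallest set containing `Z`
that is closed under the clauses of `Φ`. -/
def hornClosure (Φ : Finset (Finset V × V)) (Z : Set V) : Set V :=
  ⋂₀ {W : Set V | Z ⊆ W ∧ HornClosed Φ W}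

/-- `Ψ_𝓑 = ⋀_{B ∈ 𝓑} B → (V \ B)`. -/
def keyCNF (𝓑 : Finset (Finset V)) : Finset (Finset V × V) :=
  𝓑.biUnion fun B => (Finset.univ \ B).image fun v => (B, v)

/-- `Φ` represents the key Horn function `h_𝓑`, i.e. `Φ` is a pure Horn CNF
equivalent to `Ψ_𝓑`. -/
def Represents (𝓑 : Finset (Finset V)) (Φ : Finset (Finset V × V)) : Prop :=
  PureHorn Φ ∧ ∀ Z : Finset V, hornClosure Φ ↑Z = hornClosure (keyCNF 𝓑) ↑Z

/-- (B) number of (distinct) bodies. -/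
def sizeB (Φ : Finset (Finset V × V)) : ℕ := (Φ.image Prod.fst).card
/-- (BA) body area `Σ_i |B_i|` over the distinct bodies. -/
def sizeBA (Φ : Finset (Finset V × V)) : ℕ := ∑ B ∈ Φ.image Prod.fst, B.card
/-- (C) number of clauses `Σ_i |H_i|`. -/
def sizeC (Φ : Finset (Finset V × V)) : ℕ := Φ.card
/-- (TA) total area `Σ_i (|B_i| + |H_i|)`. -/
def sizeTA (Φ : Finset (Finset V × V)) : ℕ := sizeBA Φ + sizeC Φ
/-- (BC) bodies plus clauses `Σ_i (|H_i| + 1)`. -/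
def sizeBC (Φ : Finset (Finset V × V)) : ℕ := sizeB Φ + sizeC Φ
/-- (L) number of literals `Σ_i (|B_i| + 1)·|H_i|`. -/
def sizeL (Φ : Finset (Finset V × V)) : ℕ := ∑ c ∈ Φ, (c.1.card + 1)

/-- `μ` is one of the six size measures. -/
def IsMeasure (μ : Finset (Finset V × V) → ℕ) : Prop :=
  μ = sizeB ∨ μ = sizeBA ∨ μ = sizeTA ∨ μ = sizeC ∨ μ = sizeBC ∨ μ = sizeL

/-- `OPT_μ(𝓑)`: minimum `μ`-size of a CNF representing `h_𝓑`. -/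
noncomputable def OPT (μ : Finset (Finset V × V) → ℕ) (𝓑 : Finset (Finset V)) : ℕ :=
  sInf {s : ℕ | ∃ Φ : Finset (Finset V × V), Represents 𝓑 Φ ∧ μ Φ = s}

/-- `price_μ(S,T)`: minimum `μ`-size of a pure Horn CNF with bodies in `𝓑`
whose forward chaining from `S` reaches all of `T`. -/
noncomputable def price (μ : Finset (Finset V × V) → ℕ) (𝓑 : Finset (Finset V))
    (S T : Finset V) : ℕ :=
  sInf {s : ℕ | ∃ Φ : Finset (Finset V × V),
    PureHorn Φ ∧ (∀ c ∈ Φ, c.1 ∈ 𝓑) ∧ ↑T ⊆ hornClosure Φ ↑S ∧ μ Φ = s}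

/-- One round of forward chaining. -/
def fcStep (Φ : Finset (Finset V × V)) (W : Finset V) : Finset V :=
  W ∪ (Φ.filter fun c => c.1 ⊆ W).image Prod.snd

/-- The forward-chaining chain `W_0 = S`, `W_{i+1} = fcStep Φ W_i`. -/
def fcChain (Φ : Finset (Finset V × V)) (S : Finset V) : ℕ → Finset V
  | 0 => S
  | i + 1 => fcStep Φ (fcChain Φ S i)

/-- The CNF `⋀_{i=0}^{t-1} Bs i → (Bs (i+1) \ (S ∪ ⋃_{j=1}^{i} Bs j))`. -/
def chainCNF (S : Finset V) (Bs : ℕ → Finset V) (t : ℕ) :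
    Finset (Finset V × V) :=
  (Finset.range t).biUnion fun i =>
    (Bs (i + 1) \ (S ∪ (Finset.Icc 1 i).biUnion Bs)).image fun v => (Bs i, v)

/-!
`Φ^(1)` is a competitor for `price_L(S,S')`: the body `B_i` lies in `W_i`, and every element of
`B_{i+1}` is either old (in `S` or an earlier `B_j`, hence already derived) or a head of the
clause with body `B_i`. Conversely, each head `v ∈ B_{i+1} \ (S ∪ ⋃ B_j)` of `Φ^(1)` lies in
`W_{i+1} \ S`, so `Φ` has a clause with head `v` and body inside `W_i`; by the choice of `B_i`
that body is at least as large as `B_i`. The heads of `Φ^(1)` are pairwise distinct, so this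
matches the clauses of `Φ^(1)` injectively with clauses of `Φ` that are at least as long, and
`|Φ^(1)|_L ≤ |Φ|_L = price_L(S,S') ≤ |Φ^(1)|_L`.
-/

section Closure

variable {V : Type*}

theorem subset_hornClosure (Φ : Finset (Finset V × V)) (Z : Set V) : Z ⊆ hornClosure Φ Z :=
  fun _ hv => Set.mem_sInter.2 fun _ hW => hW.1 hv

theorem hornClosed_hornClosure (Φ : Finset (Finset V × V)) (Z : Set V) :
    HornClosed Φ (hornClosure Φ Z) :=
  fun c hc hsub => Set.mem_sInter.2 fun W hW =>
    hW.2 c hc fun _ hx => Set.mem_sInter.1 (hsub hx) W hW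

theorem hornClosure_subset {Φ : Finset (Finset V × V)} {Z W : Set V} (hZW : Z ⊆ W)
    (hW : HornClosed Φ W) : hornClosure Φ Z ⊆ W :=
  Set.sInter_subset_of_mem ⟨hZW, hW⟩

theorem price_le (μ : Finset (Finset V × V) → ℕ) {𝓑 : Finset (Finset V)} {S T : Finset V}
    {Ψ : Finset (Finset V × V)} (hΨ : PureHorn Ψ) (hbodies : ∀ c ∈ Ψ, c.1 ∈ 𝓑)
    (hT : ↑T ⊆ hornClosure Ψ ↑S) : price μ 𝓑 S T ≤ μ Ψ :=
  Nat.sInf_le ⟨Ψ, hΨ, hbodies, hT, rfl⟩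

end Closure

section ForwardChaining

variable {V : Type*} [DecidableEq V] (Φ : Finset (Finset V × V)) (S : Finset V)

theorem mem_fcStep {W : Finset V} {v : V} :
    v ∈ fcStep Φ W ↔ v ∈ W ∨ ∃ c ∈ Φ, c.1 ⊆ W ∧ c.2 = v := by
  simp only [fcStep, mem_union, mem_image, mem_filter, and_assoc]

theorem fcChain_mono : Monotone (fcChain Φ S) :=
  monotone_nat_of_le_succ fun _ => subset_union_left

theorem hornClosure_subset_fcChain {t : ℕ} (hstab : fcChain Φ S t = fcChain Φ S (t + 1)) :
    hornClosure Φ ↑S ⊆ ↑(fcChain Φ S t) := by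
  refine hornClosure_subset (by exact_mod_cast fcChain_mono Φ S t.zero_le) fun c hc hsub => ?_
  rw [mem_coe, hstab]
  exact (mem_fcStep Φ).2 (Or.inr ⟨c, hc, by exact_mod_cast hsub, rfl⟩)

theorem exists_clause_of_mem_fcChain_succ {v : V} (hvS : v ∉ S) :
    ∀ {i : ℕ}, v ∈ fcChain Φ S (i + 1) → ∃ c ∈ Φ, c.2 = v ∧ c.1 ⊆ fcChain Φ S i
  | i, hv => by
    rcases (mem_fcStep Φ).1 hv with hold | ⟨c, hc, hbody, rfl⟩
    · cases i with
      | zero => exact absurd hold hvS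
      | succ i =>
        obtain ⟨c, hc, rfl, hbody⟩ := exists_clause_of_mem_fcChain_succ hvS hold
        exact ⟨c, hc, rfl, hbody.trans (fcChain_mono Φ S i.le_succ)⟩
    · exact ⟨c, hc, rfl, hbody⟩

end ForwardChaining

section ChainCNF

variable {V : Type*} [DecidableEq V] {S : Finset V} {Bs : ℕ → Finset V} {t : ℕ}

theorem mem_chainCNF {c : Finset V × V} :
    c ∈ chainCNF S Bs t ↔
      ∃ i < t, ∃ v ∈ Bs (i + 1) \ (S ∪ (Icc 1 i).biUnion Bs), c = (Bs i, v) := by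
  simp only [chainCNF, mem_biUnion, mem_range, mem_image, eq_comm]

theorem snd_notMem_of_mem_chainCNF {c : Finset V × V} (hc : c ∈ chainCNF S Bs t) : c.2 ∉ S := by
  obtain ⟨i, -, v, hv, rfl⟩ := mem_chainCNF.1 hc
  exact fun hvS => (mem_sdiff.1 hv).2 (mem_union_left _ hvS)

theorem injOn_snd_chainCNF : Set.InjOn Prod.snd (chainCNF S Bs t : Set (Finset V × V)) := by
  have separated : ∀ {i j : ℕ} {v : V}, j < i → v ∈ Bs (j + 1) →
      v ∉ Bs (i + 1) \ (S ∪ (Icc 1 i).biUnion Bs) := fun hji hv hv' =>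
    (mem_sdiff.1 hv').2 (mem_union_right _ (mem_biUnion.2 ⟨_, mem_Icc.2 ⟨Nat.succ_pos _, hji⟩, hv⟩))
  intro c hc c' hc' (hcc' : c.2 = c'.2)
  obtain ⟨i, -, v, hv, rfl⟩ := mem_chainCNF.1 (mem_coe.1 hc)
  obtain ⟨j, -, v', hv', rfl⟩ := mem_chainCNF.1 (mem_coe.1 hc')
  obtain rfl : v = v' := hcc'
  rcases lt_trichotomy i j with hij | rfl | hji
  · exact absurd hv' (separated hij (mem_sdiff.1 hv).1)
  · rfl
  · exact absurd hv (separated hji (mem_sdiff.1 hv').1)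

theorem pureHorn_chainCNF (hne : ∀ i < t, (Bs i).Nonempty) (h0 : Bs 0 ⊆ S) :
    PureHorn (chainCNF S Bs t) := by
  intro c hc
  obtain ⟨i, hi, v, hv, rfl⟩ := mem_chainCNF.1 hc
  refine ⟨hne i hi, fun hvB => (mem_sdiff.1 hv).2 ?_⟩
  rcases i.eq_zero_or_pos with rfl | hpos
  · exact mem_union_left _ (h0 hvB)
  · exact mem_union_right _ (mem_biUnion.2 ⟨i, mem_Icc.2 ⟨hpos, le_rfl⟩, hvB⟩)

theorem coe_subset_hornClosure_chainCNF (h0 : Bs 0 ⊆ S) :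
    ∀ i ≤ t, ↑(Bs i) ⊆ hornClosure (chainCNF S Bs t) ↑S := by
  have hS := subset_hornClosure (chainCNF S Bs t) ↑S
  intro i
  induction i using Nat.strong_induction_on with
  | _ i ih =>
    intro hit
    cases i with
    | zero => exact (coe_subset.2 h0).trans hS
    | succ k =>
      intro v hv
      by_cases hold : v ∈ S ∪ (Icc 1 k).biUnion Bs
      · rcases mem_union.1 hold with hvS | hvB
        · exact hS hvS
        · obtain ⟨j, hj, hvj⟩ := mem_biUnion.1 hvB
          have hjk := (mem_Icc.1 hj).2
          exact ih j (by omega) (by omega) hvj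
      · have hclause : (Bs k, v) ∈ chainCNF S Bs t :=
          mem_chainCNF.2 ⟨k, by omega, v, mem_sdiff.2 ⟨hv, hold⟩, rfl⟩
        exact hornClosed_hornClosure _ _ _ hclause (ih k k.lt_succ_self (by omega))

theorem exists_dominating_clause_of_mem_chainCNF {𝓑 : Finset (Finset V)}
    {Φ : Finset (Finset V × V)} (hbodies : ∀ c ∈ Φ, c.1 ∈ 𝓑)
    (hsub : ∀ i ≤ t, Bs i ⊆ fcChain Φ S i)
    (hmin : ∀ i < t, ∀ B ∈ 𝓑, B ⊆ fcChain Φ S i → (Bs i).card ≤ B.card)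
    {c : Finset V × V} (hc : c ∈ chainCNF S Bs t) :
    ∃ d ∈ Φ, d.2 = c.2 ∧ c.1.card ≤ d.1.card := by
  have hvS := snd_notMem_of_mem_chainCNF hc
  obtain ⟨i, hi, v, hv, rfl⟩ := mem_chainCNF.1 hc
  obtain ⟨d, hd, hdv, hbody⟩ :=
    exists_clause_of_mem_fcChain_succ Φ S hvS (hsub (i + 1) hi (mem_sdiff.1 hv).1)
  exact ⟨d, hd, hdv, hmin i hi d.1 (hbodies d hd) hbody⟩

end ChainCNF

theorem sizeL_le_sizeL_of_injOn_snd {V : Type*} [DecidableEq V] {Ψ Φ : Finset (Finset V × V)}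
    (hinj : Set.InjOn Prod.snd (Ψ : Set (Finset V × V))) (hdom : ∀ c ∈ Ψ, ∃ d ∈ Φ, d.2 = c.2 ∧ c.1.card ≤ d.1.card) :
    sizeL Ψ ≤ sizeL Φ := by
  choose! f hfΦ hfsnd hfcard using hdom
  have hfinj : Set.InjOn f ↑Ψ := fun c hc c' hc' hff =>
    hinj hc hc' (by rw [← hfsnd c hc, ← hfsnd c' hc', hff])
  calc sizeL Ψ ≤ ∑ c ∈ Ψ, ((f c).1.card + 1) :=
        sum_le_sum fun c hc => Nat.add_le_add_right (hfcard c hc) 1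
    _ = ∑ d ∈ Ψ.image f, (d.1.card + 1) := (sum_image (f := fun d => d.1.card + 1) hfinj).symm
    _ ≤ sizeL Φ := sum_le_sum_of_subset (image_subset_iff.2 hfΦ)

theorem stmt12_general {V : Type*} [DecidableEq V]
    (𝓑 : Finset (Finset V))
    (hne : ∀ B ∈ 𝓑, B.Nonempty)
    (S S' : Finset V)
    (Φ : Finset (Finset V × V)) (t : ℕ)
    (hbodies : ∀ c ∈ Φ, c.1 ∈ 𝓑)
    (hSreach : ↑S' ⊆ hornClosure Φ ↑S)
    (hopt : sizeL Φ = price sizeL 𝓑 S S')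
    (hstab : fcChain Φ S t = fcChain Φ S (t + 1))
    (Bseq : ℕ → Finset V)
    (hBseq : ∀ i < t, Bseq i ∈ 𝓑 ∧ Bseq i ⊆ fcChain Φ S i ∧
      ∀ B' ∈ 𝓑, B' ⊆ fcChain Φ S i → (Bseq i).card ≤ B'.card)
    (hBt : Bseq t = S')
    : sizeL (chainCNF S Bseq t) = sizeL Φ ∧ sizeL Φ = price sizeL 𝓑 S S' := by
  have hS'W : S' ⊆ fcChain Φ S t := by
    exact_mod_cast hSreach.trans (hornClosure_subset_fcChain Φ S hstab)
  have hsub : ∀ i ≤ t, Bseq i ⊆ fcChain Φ S i := fun i hi =>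
    hi.lt_or_eq.elim (fun hit => (hBseq i hit).2.1) fun hit => hit ▸ hBt ▸ hS'W
  have h0 : Bseq 0 ⊆ S := hsub 0 t.zero_le
  refine ⟨le_antisymm ?_ ?_, hopt⟩
  · exact sizeL_le_sizeL_of_injOn_snd injOn_snd_chainCNF fun c hc =>
      exists_dominating_clause_of_mem_chainCNF hbodies hsub (fun i hi => (hBseq i hi).2.2) hc
  · have hbodies₁ : ∀ c ∈ chainCNF S Bseq t, c.1 ∈ 𝓑 := fun c hc => by
      obtain ⟨i, hi, -, -, rfl⟩ := mem_chainCNF.1 hc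
      exact (hBseq i hi).1
    rw [hopt]
    exact price_le sizeL (pureHorn_chainCNF (fun i hi => hne _ (hBseq i hi).1) h0) hbodies₁
      (hBt ▸ coe_subset_hornClosure_chainCNF h0 t le_rfl)

/-- Proposition 3: the CNF
`Φ^(1) = ⋀_{i=0}^{t-1} B_i → (B_{i+1} \ (S ∪ ⋃_{j=1}^{i} B_j))`
satisfies `|Φ^(1)|_L = |Φ|_L = price_L(S,S')`. -/
theorem stmt12 {V : Type*} [Fintype V] [DecidableEq V]
    (𝓑 : Finset (Finset V))
    (hne : ∀ B ∈ 𝓑, B.Nonempty) (hproper : ∀ B ∈ 𝓑, B ≠ Finset.univ)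
    (hsperner : ∀ B ∈ 𝓑, ∀ B' ∈ 𝓑, B ⊆ B' → B = B')
    (hcover : ∀ v : V, ∃ B ∈ 𝓑, v ∈ B)
    (hinter : ∀ v : V, ∃ B ∈ 𝓑, v ∉ B)
    (S S' : Finset V) (hS : ∃ B ∈ 𝓑, B ⊆ S)
    (Φ : Finset (Finset V × V)) (t : ℕ)
    (hPH : PureHorn Φ) (hbodies : ∀ c ∈ Φ, c.1 ∈ 𝓑)
    (hSreach : ↑S' ⊆ hornClosure Φ ↑S)
    (hopt : sizeL Φ = price sizeL 𝓑 S S')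
    (hstab : fcChain Φ S t = fcChain Φ S (t + 1))
    (htleast : ∀ j < t, fcChain Φ S j ≠ fcChain Φ S (j + 1))
    (hround : ∀ (Φ' : Finset (Finset V × V)) (t' : ℕ), PureHorn Φ' →
      (∀ c ∈ Φ', c.1 ∈ 𝓑) → ↑S' ⊆ hornClosure Φ' ↑S →
      sizeL Φ' = price sizeL 𝓑 S S' →
      fcChain Φ' S t' = fcChain Φ' S (t' + 1) → t ≤ t')
    (Bseq : ℕ → Finset V)
    (hBseq : ∀ i < t, Bseq i ∈ 𝓑 ∧ Bseq i ⊆ fcChain Φ S i ∧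
      ∀ B' ∈ 𝓑, B' ⊆ fcChain Φ S i → (Bseq i).card ≤ B'.card)
    (hBt : Bseq t = S')
    : sizeL (chainCNF S Bseq t) = sizeL Φ ∧ sizeL Φ = price sizeL 𝓑 S S' :=
  stmt12_general 𝓑 hne S S' Φ t hbodies hSreach hopt hstab Bseq hBseq hBt
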